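/- arXiv:1805.10797 — 4 statements merged into one kernel-verified Lean document; each statement's English description precedes it below -/
import Mathlib

section
/- The σ-algebra on the space M₊(S) of finite non-negative Borel measures on a complete separable metric space (S,ϱ) generated by the evaluation mappings μ ↦ μ(A), A Borel in S, coincides with the Borel σ-algebra induced by the Lévy–Prokhorov metric π on M₊(S). -/
/-!
Evaluations `μ ↦ μ F` at closed sets `F` are upper semicontinuous for the Lévy–Prokhorov metric,
so by a π-λ argument every evaluation `μ ↦ μ A` is Borel. Conversely, the Lévy–Prokhorov space
is separable, because finitely supported measures with rational weights at the points of a dense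
sequence are dense; hence every open set is a countable union of balls. A ball is cut out by
countably many evaluation inequalities: the Lévy–Prokhorov conditions need only be tested at
rational levels and on finite unions of sets from a countable basis, by inner approximation of
thickenings.
-/

open MeasureTheory Topology Metric Filter Set ENNReal NNReal TopologicalSpace

lemma DenseRange.exists_subset_closedBall {Ω : Type*} [PseudoMetricSpace Ω] {xs : ℕ → Ω}
    (hxs : DenseRange xs) {A : Set Ω} (hAb : Bornology.IsBounded A) {r : ℝ} (hr : 0 < r)
    (hAd : diam A ≤ r) :
    ∃ k, A ⊆ closedBall (xs k) (2 * r) := by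
  rcases A.eq_empty_or_nonempty with h | ⟨a, ha⟩
  · exact ⟨0, by simp [h]⟩
  obtain ⟨k, hk⟩ := Metric.denseRange_iff.1 hxs a r hr
  refine ⟨k, fun y hy ↦ mem_closedBall.2 ?_⟩
  calc dist y (xs k) ≤ dist y a + dist a (xs k) := dist_triangle _ _ _
    _ ≤ r + r := add_le_add ((dist_le_diam_of_mem hAb hy ha).trans hAd) hk.le
    _ = 2 * r := by ring

namespace MeasureTheory

section LPDominated

variable {Ω : Type*} [PseudoMetricSpace Ω] [MeasurableSpace Ω]

/-- One of the two inequalities defining the Lévy–Prokhorov distance, with the thickening radius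
`δ` and the additive slack `c` decoupled. -/
def LPDominated (δ : ℝ) (c : ℝ≥0∞) (μ ν : Measure Ω) : Prop :=
  ∀ B, MeasurableSet B → μ B ≤ ν (thickening δ B) + c

variable {δ δ' : ℝ} {c c' : ℝ≥0∞} {μ ν : Measure Ω}

lemma LPDominated.mono (h : LPDominated δ c μ ν) (hδ : δ ≤ δ') (hc : c ≤ c') :
    LPDominated δ' c' μ ν :=
  fun B hB ↦ (h B hB).trans (add_le_add (measure_mono (thickening_mono hδ B)) hc)

lemma LPDominated.add {c₁ c₂ : ℝ≥0∞} {μ₁ μ₂ ν₁ ν₂ : Measure Ω} (h₁ : LPDominated δ c₁ μ₁ ν₁)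
    (h₂ : LPDominated δ c₂ μ₂ ν₂) : LPDominated δ (c₁ + c₂) (μ₁ + μ₂) (ν₁ + ν₂) := fun B hB ↦ by
  simp only [Measure.add_apply]
  calc μ₁ B + μ₂ B ≤ (ν₁ (thickening δ B) + c₁) + (ν₂ (thickening δ B) + c₂) :=
        add_le_add (h₁ B hB) (h₂ B hB)
    _ = _ := add_add_add_comm ..

lemma LPDominated.finset_sum {ι : Type*} {s : Finset ι} {c : ι → ℝ≥0∞} {μ ν : ι → Measure Ω}
    (h : ∀ i ∈ s, LPDominated δ (c i) (μ i) (ν i)) :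
    LPDominated δ (∑ i ∈ s, c i) (∑ i ∈ s, μ i) (∑ i ∈ s, ν i) := by
  classical
  induction s using Finset.induction_on with
  | empty => intro B _; simp
  | insert i s hi ih =>
    simp only [Finset.sum_insert hi]
    exact (h i (Finset.mem_insert_self i s)).add fun B hB ↦
      ih (fun j hj ↦ h j (Finset.mem_insert_of_mem hj)) B hB

lemma lpDominated_zero_left (δ : ℝ) (ν : Measure Ω) : LPDominated δ 0 0 ν :=
  fun _ _ ↦ by simp

lemma lpDominated_zero_right (δ : ℝ) (μ : Measure Ω) : LPDominated δ (μ univ) μ 0 :=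
  fun B _ ↦ by simpa using measure_mono (subset_univ B)

lemma levyProkhorovEDist_le_of_lpDominated (h₁ : ∀ δ' > δ, LPDominated δ' c μ ν)
    (h₂ : ∀ δ' > δ, LPDominated δ' c ν μ) :
    levyProkhorovEDist μ ν ≤ max (ENNReal.ofReal δ) c := by
  refine levyProkhorovEDist_le_of_forall _ _ _ fun ε B hε hε_top hB ↦ ?_
  have hδ : δ < ε.toReal := lt_of_not_ge fun h ↦ hε.not_ge <| le_max_of_le_left <|
    (ofReal_toReal hε_top.ne).symm.le.trans (ofReal_le_ofReal h)
  have hc : c ≤ ε := (le_max_right _ _).trans hε.le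
  exact ⟨(h₁ _ hδ B hB).trans (by gcongr), (h₂ _ hδ B hB).trans (by gcongr)⟩

variable {A : Set Ω} {x : Ω} {r : ℝ} {w : ℝ≥0}

lemma lpDominated_restrict_dirac (hA : A ⊆ closedBall x r) (hr : r < δ) (hw : μ A ≤ w) :
    LPDominated δ 0 (μ.restrict A) (w • Measure.dirac x) := by
  intro B hB
  rw [add_zero, Measure.restrict_apply hB]
  by_cases hx : x ∈ thickening δ B
  · calc μ (B ∩ A) ≤ μ A := measure_mono inter_subset_right
      _ ≤ w := hw
      _ = (w • Measure.dirac x) (thickening δ B) := by simp [Measure.dirac_apply_of_mem hx]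
  · have hBA : B ∩ A = ∅ := eq_empty_of_forall_notMem fun y hy ↦ hx <|
      mem_thickening_iff.2 ⟨y, hy.1, (dist_comm x y ▸ mem_closedBall.1 (hA hy.2)).trans_lt hr⟩
    simp [hBA]

lemma lpDominated_dirac_restrict (hA : A ⊆ closedBall x r) (hr : r < δ) (hw : w ≤ μ A + c) :
    LPDominated δ c (w • Measure.dirac x) (μ.restrict A) := by
  intro B hB
  by_cases hx : x ∈ B
  · have hAB : A ⊆ thickening δ B := fun y hy ↦
      mem_thickening_iff.2 ⟨x, hx, (mem_closedBall.1 (hA hy)).trans_lt hr⟩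
    simpa [Measure.dirac_apply_of_mem hx, Measure.restrict_apply_superset hAB] using hw
  · simp [Measure.dirac_apply' x hB, hx]

end LPDominated

section FiniteBasisUnions

variable (Ω : Type*) [TopologicalSpace Ω] [SecondCountableTopology Ω]

def finiteBasisUnions : Set (Set Ω) :=
  range fun t : Finset (countableBasis Ω) ↦ ⋃ b ∈ t, (b : Set Ω)

lemma countable_finiteBasisUnions : (finiteBasisUnions Ω).Countable :=
  have := (countable_countableBasis Ω).to_subtype
  countable_range _

variable {Ω}

lemma isOpen_of_mem_finiteBasisUnions {U : Set Ω} (hU : U ∈ finiteBasisUnions Ω) : IsOpen U := by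
  obtain ⟨t, rfl⟩ := hU
  exact isOpen_biUnion fun b _ ↦ isOpen_of_mem_countableBasis b.2

lemma exists_mem_finiteBasisUnions_lt_measure [MeasurableSpace Ω] (μ : Measure Ω) {G : Set Ω}
    (hG : IsOpen G) {a : ℝ≥0∞} (ha : a < μ G) :
    ∃ U ∈ finiteBasisUnions Ω, U ⊆ G ∧ a < μ U := by
  classical
  have := (countable_countableBasis Ω).to_subtype
  set V : Finset (countableBasis Ω) → Set Ω := fun t ↦
    ⋃ b ∈ t.filter (fun b : countableBasis Ω ↦ (b : Set Ω) ⊆ G), (b : Set Ω)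
  have hV : ⋃ t, V t = G := by
    refine subset_antisymm (iUnion_subset fun t ↦ iUnion₂_subset fun b hb ↦
      (Finset.mem_filter.1 hb).2) fun x hx ↦ ?_
    obtain ⟨b, hb, hxb, hbG⟩ := (isBasis_countableBasis Ω).exists_subset_of_mem_open hx hG
    exact mem_iUnion.2
      ⟨{⟨b, hb⟩}, mem_biUnion (Finset.mem_filter.2 ⟨Finset.mem_singleton_self _, hbG⟩) hxb⟩
  have hVmono : Monotone V := fun t t' htt' ↦
    biUnion_subset_biUnion_left (Finset.coe_subset.2 (Finset.filter_subset_filter _ htt'))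
  rw [← hV, hVmono.directed_le.measure_iUnion, lt_iSup_iff] at ha
  obtain ⟨t, ht⟩ := ha
  exact ⟨V t, ⟨_, rfl⟩, iUnion₂_subset fun b hb ↦ (Finset.mem_filter.1 hb).2, ht⟩

end FiniteBasisUnions

section Approximation

variable {Ω : Type*} [PseudoMetricSpace Ω] [SecondCountableTopology Ω] [MeasurableSpace Ω]
  {μ ν : Measure Ω}

lemma LPDominated.of_forall_finiteBasisUnions {δ δ' : ℝ} {c : ℝ≥0∞}
    (h : ∀ U ∈ finiteBasisUnions Ω, μ U ≤ ν (thickening δ U) + c) (hδ : δ < δ') :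
    LPDominated δ' c μ ν := by
  intro B _
  refine le_of_forall_lt fun a ha ↦ ?_
  have hB : a < μ (thickening (δ' - δ) B) :=
    ha.trans_le (measure_mono (self_subset_thickening (sub_pos.2 hδ) B))
  obtain ⟨U, hU, hUB, haU⟩ := exists_mem_finiteBasisUnions_lt_measure μ isOpen_thickening hB
  have hthick : thickening δ U ⊆ thickening δ' B :=
    calc thickening δ U ⊆ thickening δ (thickening (δ' - δ) B) := thickening_subset_of_subset _ hUB
      _ ⊆ thickening (δ + (δ' - δ)) B := thickening_thickening_subset _ _ _
      _ = thickening δ' B := by rw [add_sub_cancel]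
  exact haU.trans_le ((h U hU).trans (add_le_add (measure_mono hthick) le_rfl))

lemma levyProkhorovEDist_lt_ofReal_iff [OpensMeasurableSpace Ω] {r : ℝ} :
    levyProkhorovEDist μ ν < ENNReal.ofReal r ↔ ∃ q : ℚ, 0 ≤ q ∧ (q : ℝ) < r ∧
      ∀ U ∈ finiteBasisUnions Ω, μ U ≤ ν (thickening q U) + ENNReal.ofReal q ∧
        ν U ≤ μ (thickening q U) + ENNReal.ofReal q := by
  constructor
  · intro h
    obtain ⟨q, hq, hlt, hqr⟩ := ENNReal.lt_iff_exists_rat_btwn.1 h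
    refine ⟨q, hq, (ENNReal.ofReal_lt_ofReal_iff'.1 hqr).1, fun U hU ↦ ?_⟩
    have hUm := (isOpen_of_mem_finiteBasisUnions hU).measurableSet
    have h₁ := left_measure_le_of_levyProkhorovEDist_lt hlt hUm
    have h₂ := right_measure_le_of_levyProkhorovEDist_lt hlt hUm
    rw [← ENNReal.ofReal, ENNReal.toReal_ofReal (Rat.cast_nonneg.2 hq)] at h₁ h₂
    exact ⟨h₁, h₂⟩
  · rintro ⟨q, hq, hqr, H⟩
    have hle := levyProkhorovEDist_le_of_lpDominated
      (fun _ h ↦ LPDominated.of_forall_finiteBasisUnions (fun U hU ↦ (H U hU).1) h)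
      (fun _ h ↦ LPDominated.of_forall_finiteBasisUnions (fun U hU ↦ (H U hU).2) h)
    rw [max_self] at hle
    exact hle.trans_lt ((ENNReal.ofReal_lt_ofReal_iff (hqr.trans_le' (Rat.cast_nonneg.2 hq))).2 hqr)

end Approximation

section Partition

variable {Ω : Type*} [MeasurableSpace Ω] {A : ℕ → Set Ω}

lemma exists_measure_compl_biUnion_range_lt (μ : Measure Ω) [IsFiniteMeasure μ]
    (hA : ∀ n, MeasurableSet (A n)) (hcov : ⋃ n, A n = univ) {ε : ℝ≥0∞} (hε : 0 < ε) :
    ∃ N, μ (⋃ n ∈ Finset.range N, A n)ᶜ < ε := by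
  have hanti : Antitone fun N ↦ (⋃ n ∈ Finset.range N, A n)ᶜ := fun M N hMN ↦
    compl_subset_compl.2 (biUnion_subset_biUnion_left (by simpa using hMN))
  have hempty : ⋂ N, (⋃ n ∈ Finset.range N, A n)ᶜ = ∅ := by
    rw [← compl_iUnion, compl_empty_iff, eq_univ_iff_forall]
    intro x
    obtain ⟨n, hn⟩ := mem_iUnion.1 (hcov.symm ▸ mem_univ x : x ∈ ⋃ n, A n)
    exact mem_iUnion.2 ⟨n + 1, mem_iUnion₂.2 ⟨n, Finset.self_mem_range_succ n, hn⟩⟩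
  have := tendsto_measure_iInter_atTop (μ := μ) (fun N ↦
    (Finset.measurableSet_biUnion _ fun n _ ↦ hA n).compl.nullMeasurableSet) hanti
    ⟨0, measure_ne_top μ _⟩
  rw [hempty, measure_empty] at this
  exact (this.eventually (gt_mem_nhds hε)).exists

lemma Measure.eq_sum_restrict_add_restrict_compl (μ : Measure Ω) (hA : ∀ n, MeasurableSet (A n))
    (hdisj : Pairwise fun n m ↦ Disjoint (A n) (A m)) (s : Finset ℕ) :
    μ = ∑ n ∈ s, μ.restrict (A n) + μ.restrict (⋃ n ∈ s, A n)ᶜ := by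
  rw [← Finset.sum_coe_sort, ← Measure.sum_fintype,
    ← Measure.restrict_biUnion_finset (hdisj.set_pairwise _) hA,
    Measure.restrict_add_restrict_compl (Finset.measurableSet_biUnion _ fun n _ ↦ hA n)]

end Partition

section Density

variable {Ω : Type*} [PseudoMetricSpace Ω] [MeasurableSpace Ω]

noncomputable def atomicMeasure (xs : ℕ → Ω) {N : ℕ} (f : Fin N → ℕ × ℚ) : Measure Ω :=
  ∑ i, ((f i).2 : ℝ).toNNReal • Measure.dirac (xs (f i).1)

instance (xs : ℕ → Ω) {N : ℕ} (f : Fin N → ℕ × ℚ) : IsFiniteMeasure (atomicMeasure xs f) := by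
  unfold atomicMeasure; infer_instance

/-- Partition `Ω` into pieces `A n` of diameter `≤ r`, keep the first `N` pieces (the rest has
mass `< r`), and replace `μ` on `A n` by an atom at a nearby `xs (k n)` with a rational weight
slightly above `μ (A n)`. -/
lemma exists_atomicMeasure_levyProkhorovEDist_lt [OpensMeasurableSpace Ω] [SeparableSpace Ω]
    {xs : ℕ → Ω} (hxs : DenseRange xs) (μ : Measure Ω) [IsFiniteMeasure μ] {ε : ℝ} (hε : 0 < ε) :
    ∃ (N : ℕ) (f : Fin N → ℕ × ℚ),
      levyProkhorovEDist μ (atomicMeasure xs f) < ENNReal.ofReal ε := by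
  set r := ε / 4 with hr_def
  have hr : 0 < r := by positivity
  obtain ⟨A, hAm, hAb, hAd, hAcov, hAdisj⟩ :=
    SeparableSpace.exists_measurable_partition_diam_le Ω hr
  obtain ⟨N, hN⟩ := exists_measure_compl_biUnion_range_lt μ hAm hAcov (ENNReal.ofReal_pos.2 hr)
  obtain ⟨c, hc_pos, hc_sum⟩ :=
    ENNReal.exists_pos_sum_of_countable (ENNReal.ofReal_pos.2 hr).ne' ℕ
  have hweight : ∀ n, ∃ q : ℚ,
      μ (A n) ≤ (q : ℝ).toNNReal ∧ ((q : ℝ).toNNReal : ℝ≥0∞) ≤ μ (A n) + c n := by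
    intro n
    obtain ⟨q, -, h₁, h₂⟩ := ENNReal.lt_iff_exists_rat_btwn.1
      (ENNReal.lt_add_right (measure_ne_top μ (A n)) (ENNReal.coe_ne_zero.2 (hc_pos n).ne'))
    exact ⟨q, h₁.le, h₂.le⟩
  choose k hk using fun n ↦ hxs.exists_subset_closedBall (hAb n) hr (hAd n)
  choose q hq using hweight
  set f : Fin N → ℕ × ℚ := fun i ↦ (k i, q i)
  refine ⟨N, f, ?_⟩
  have hμ := Measure.eq_sum_restrict_add_restrict_compl μ hAm hAdisj (Finset.range N)
  have hν : atomicMeasure xs f =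
      ∑ n ∈ Finset.range N, ((q n : ℝ).toNNReal • Measure.dirac (xs (k n))) + 0 := by
    rw [add_zero, Finset.sum_range]; rfl
  have h3r : 2 * r < 3 * r := by linarith
  have h₁ : LPDominated (3 * r) (ENNReal.ofReal r) μ (atomicMeasure xs f) := by
    rw [hν, hμ]
    refine ((LPDominated.finset_sum fun n _ ↦ lpDominated_restrict_dirac (hk n) h3r (hq n).1).add
      (lpDominated_zero_right _ _)).mono le_rfl ?_
    simpa using hN.le
  have h₂ : LPDominated (3 * r) (ENNReal.ofReal r) (atomicMeasure xs f) μ := by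
    rw [hν, hμ]
    refine ((LPDominated.finset_sum fun n _ ↦ lpDominated_dirac_restrict (hk n) h3r (hq n).2).add
      (lpDominated_zero_left _ _)).mono le_rfl ?_
    rw [add_zero]
    exact (ENNReal.sum_le_tsum _).trans hc_sum.le
  calc levyProkhorovEDist μ _ ≤ max (ENNReal.ofReal (3 * r)) (ENNReal.ofReal r) :=
        levyProkhorovEDist_le_of_lpDominated (fun _ h ↦ h₁.mono h.le le_rfl)
          (fun _ h ↦ h₂.mono h.le le_rfl)
    _ < ENNReal.ofReal ε := by
        rw [max_lt_iff, ENNReal.ofReal_lt_ofReal_iff hε, ENNReal.ofReal_lt_ofReal_iff hε]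
        constructor <;> linarith

end Density

lemma borel_le_of_measurableSet_ball {X : Type*} [PseudoMetricSpace X] [SecondCountableTopology X]
    {m : MeasurableSpace X} (h : ∀ x r, MeasurableSet[m] (ball x r)) : borel X ≤ m := by
  refine MeasurableSpace.generateFrom_le fun U hU ↦ ?_
  choose r hr hrU using Metric.isOpen_iff.1 hU
  obtain ⟨T, hT, hTU⟩ := isOpen_iUnion_countable (fun x : U ↦ ball (x : X) (r x x.2))
    fun _ ↦ isOpen_ball
  have hU_eq : U = ⋃ x ∈ T, ball (x : X) (r x x.2) := by
    rw [hTU]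
    exact subset_antisymm (fun x hx ↦ mem_iUnion.2 ⟨(⟨x, hx⟩ : U), mem_ball_self (hr x hx)⟩)
      (iUnion_subset fun x ↦ hrU x x.2)
  rw [hU_eq]
  exact MeasurableSet.biUnion hT fun x _ ↦ h _ _

namespace LevyProkhorov

lemma iSup_comap_apply_eq_comap_toMeasure {Ω : Type*} [MeasurableSpace Ω] :
    ⨆ (A : Set Ω) (_ : MeasurableSet A), MeasurableSpace.comap
        (fun μ : LevyProkhorov (FiniteMeasure Ω) ↦ (toMeasureEquiv μ) A) inferInstance =
      MeasurableSpace.comap (fun μ : LevyProkhorov (FiniteMeasure Ω) ↦ (μ.toMeasure : Measure Ω))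
        inferInstance := by
  simp only [Measure.instMeasurableSpace, MeasurableSpace.comap_iSup, MeasurableSpace.comap_comp]
  refine iSup_congr fun A ↦ iSup_congr fun _ ↦ ?_
  have hcomp : ((fun m : Measure Ω ↦ m A) ∘ fun μ : LevyProkhorov (FiniteMeasure Ω) ↦
      (μ.toMeasure : Measure Ω)) = ((↑) : ℝ≥0 → ℝ≥0∞) ∘ fun μ ↦ (toMeasureEquiv μ) A :=
    funext fun μ ↦ (FiniteMeasure.ennreal_coeFn_eq_coeFn_toMeasure _ A).symm
  rw [hcomp, ← MeasurableSpace.comap_comp]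
  exact congrArg _ ENNReal.isOpenEmbedding_coe.measurableEmbedding.comap_eq.symm

variable {Ω : Type*} [PseudoMetricSpace Ω] [MeasurableSpace Ω]

instance [OpensMeasurableSpace Ω] [SeparableSpace Ω] :
    SeparableSpace (LevyProkhorov (FiniteMeasure Ω)) := by
  rcases isEmpty_or_nonempty Ω with _ | _
  · have : Subsingleton (LevyProkhorov (FiniteMeasure Ω)) :=
      ⟨fun μ ν ↦ toMeasure_injective (Subtype.ext (Subsingleton.elim _ _))⟩
    infer_instance
  obtain ⟨xs, hxs⟩ := exists_dense_seq Ω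
  refine ⟨⟨range fun p : Σ N, Fin N → ℕ × ℚ ↦ ofMeasure ⟨atomicMeasure xs p.2, inferInstance⟩,
    countable_range _, Metric.denseRange_iff.2 fun μ ε hε ↦ ?_⟩⟩
  obtain ⟨N, f, hf⟩ := exists_atomicMeasure_levyProkhorovEDist_lt hxs μ.toMeasure hε
  exact ⟨⟨N, f⟩, edist_lt_ofReal.1 hf⟩

lemma upperSemicontinuous_apply_of_isClosed [OpensMeasurableSpace Ω] {F : Set Ω}
    (hF : IsClosed F) :
    UpperSemicontinuous fun μ : LevyProkhorov (FiniteMeasure Ω) ↦ (μ.toMeasure : Measure Ω) F := by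
  intro μ c hc
  have hlim : Tendsto (fun δ ↦ (μ.toMeasure : Measure Ω) (thickening δ F) + ENNReal.ofReal δ)
      (𝓝[>] 0) (𝓝 ((μ.toMeasure : Measure Ω) F)) := by
    simpa using (tendsto_measure_thickening_of_isClosed ⟨1, one_pos, measure_ne_top _ _⟩ hF).add
      (ENNReal.tendsto_ofReal (tendsto_nhdsWithin_of_tendsto_nhds tendsto_id))
  obtain ⟨δ, hδc, hδ⟩ := ((hlim.eventually (gt_mem_nhds hc)).and self_mem_nhdsWithin).exists
  filter_upwards [ball_mem_nhds μ hδ] with ν hν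
  calc (ν.toMeasure : Measure Ω) F
      ≤ (μ.toMeasure : Measure Ω) (thickening (ENNReal.ofReal δ).toReal F) + ENNReal.ofReal δ :=
        left_measure_le_of_levyProkhorovEDist_lt (edist_lt_ofReal.2 hν) hF.measurableSet
    _ < c := by rwa [ENNReal.toReal_ofReal hδ.le]

lemma measurable_toMeasure_borel [BorelSpace Ω] :
    Measurable[borel (LevyProkhorov (FiniteMeasure Ω))]
      fun μ : LevyProkhorov (FiniteMeasure Ω) ↦ (μ.toMeasure : Measure Ω) := by
  let _ := borel (LevyProkhorov (FiniteMeasure Ω))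
  have : BorelSpace (LevyProkhorov (FiniteMeasure Ω)) := ⟨rfl⟩
  exact .measure_of_isPiSystem (BorelSpace.measurable_eq.trans borel_eq_generateFrom_isClosed)
    isPiSystem_isClosed (fun _ hF ↦ (upperSemicontinuous_apply_of_isClosed hF).measurable)
    (upperSemicontinuous_apply_of_isClosed isClosed_univ).measurable

lemma measurableSet_ball_comap_toMeasure [OpensMeasurableSpace Ω] [SecondCountableTopology Ω]
    (μ : LevyProkhorov (FiniteMeasure Ω)) (r : ℝ) :
    MeasurableSet[MeasurableSpace.comap (fun ν : LevyProkhorov (FiniteMeasure Ω) ↦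
      (ν.toMeasure : Measure Ω)) inferInstance] (ball μ r) := by
  let _ := MeasurableSpace.comap (fun ν : LevyProkhorov (FiniteMeasure Ω) ↦
    (ν.toMeasure : Measure Ω)) inferInstance
  have hev {U : Set Ω} (hU : IsOpen U) :
      Measurable fun ν : LevyProkhorov (FiniteMeasure Ω) ↦ (ν.toMeasure : Measure Ω) U :=
    (Measure.measurable_coe hU.measurableSet).comp (comap_measurable _)
  have hball : ball μ r = ⋃ (q : ℚ) (_ : 0 ≤ q ∧ (q : ℝ) < r), ⋂ U ∈ finiteBasisUnions Ω,
      {ν | (ν.toMeasure : Measure Ω) U ≤ (μ.toMeasure : Measure Ω) (thickening q U) +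
        ENNReal.ofReal q} ∩
      {ν | (μ.toMeasure : Measure Ω) U ≤ (ν.toMeasure : Measure Ω) (thickening q U) +
        ENNReal.ofReal q} := by
    ext ν
    simp only [mem_ball, ← edist_lt_ofReal, edist_finiteMeasure_def,
      levyProkhorovEDist_lt_ofReal_iff, mem_iUnion, mem_iInter, mem_inter_iff, mem_ofPred_eq,
      exists_prop, and_assoc]
  rw [hball]
  refine .iUnion fun q ↦ .iUnion fun _ ↦ .biInter (countable_finiteBasisUnions Ω) fun U hU ↦ ?_
  have hU := isOpen_of_mem_finiteBasisUnions hU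
  exact (measurableSet_le (hev hU) measurable_const).inter
    (measurableSet_le measurable_const ((hev isOpen_thickening).add_const _))

end LevyProkhorov

end MeasureTheory

theorem stmt_0_general {S : Type*} [MetricSpace S] [SecondCountableTopology S]
    [MeasurableSpace S] [BorelSpace S] :
    borel (LevyProkhorov (FiniteMeasure S)) =
      ⨆ (A : Set S) (_ : MeasurableSet A),
        MeasurableSpace.comap
          (fun μ : LevyProkhorov (FiniteMeasure S) =>
            (LevyProkhorov.toMeasureEquiv (α := FiniteMeasure S) μ) A) inferInstance := by
  rw [LevyProkhorov.iSup_comap_apply_eq_comap_toMeasure]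
  exact le_antisymm
    (borel_le_of_measurableSet_ball LevyProkhorov.measurableSet_ball_comap_toMeasure)
    LevyProkhorov.measurable_toMeasure_borel.comap_le

/-- The σ-algebra on `M₊(S)` (finite non-negative Borel measures on a complete separable
metric space `S`) generated by the evaluation maps `μ ↦ μ A`, `A` Borel, coincides with the
Borel σ-algebra of the Lévy–Prokhorov metric. -/
theorem stmt_0 {S : Type*} [MetricSpace S] [CompleteSpace S] [SecondCountableTopology S]
    [MeasurableSpace S] [BorelSpace S] :
    borel (LevyProkhorov (FiniteMeasure S)) =
      ⨆ (A : Set S) (_ : MeasurableSet A),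
        MeasurableSpace.comap
          (fun μ : LevyProkhorov (FiniteMeasure S) =>
            (LevyProkhorov.toMeasureEquiv (α := FiniteMeasure S) μ) A) inferInstance :=
  stmt_0_general
end

section
/- The set M_ℕ(S) of finite measures on S taking only values in the non-negative integers is closed in the space (M₊(S), π) of finite non-negative measures equipped with the Lévy–Prokhorov metric. -/
/-!
If `levyProkhorovEDist μ ν < ε` with `ν` integer-valued and `F` is closed, then
`μ F ≤ ν F^ε + ε` and `ν F^ε ≤ μ F^{2ε} + ε`, where `F^r` is the open `r`-thickening. As
`μ F^{2ε} → μ F`, the integers `ν F^ε` converge to `μ F`, which is therefore an integer.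
Integer values of a finite measure survive complements and countable disjoint unions, so
Dynkin's π-λ theorem extends this from closed sets to all Borel sets.
-/

open MeasureTheory Metric Set ENNReal Topology

lemma ENNReal.exists_natCast_eq_of_forall_le_add {x : ℝ≥0∞} (hx : x ≠ ∞)
    (h : ∀ δ > 0, ∃ n : ℕ, x ≤ n + δ ∧ (n : ℝ≥0∞) ≤ x + δ) : ∃ n : ℕ, x = n := by
  lift x to NNReal using hx
  have hcl : (x : ℝ) ∈ closure (range ((↑) : ℕ → ℝ)) := by
    refine Metric.mem_closure_iff.2 fun δ hδ ↦ ?_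
    obtain ⟨n, hle, hge⟩ := h (ENNReal.ofReal (δ / 2)) (by simpa using hδ)
    rw [← ENNReal.ofReal_natCast, ← ENNReal.ofReal_coe_nnreal,
      ← ENNReal.ofReal_add (by positivity) (by positivity),
      ENNReal.ofReal_le_ofReal_iff (by positivity)] at hle hge
    exact ⟨n, mem_range_self n, by rw [Real.dist_eq, abs_lt]; constructor <;> linarith⟩
  rw [Nat.isClosedEmbedding_coe_real.isClosed_range.closure_eq] at hcl
  obtain ⟨n, hn⟩ := hcl
  exact ⟨n, by exact_mod_cast hn.symm⟩

lemma ENNReal.exists_tsum_natCast_eq {ι : Type*} {f : ι → ℕ} (h : ∑' i, (f i : ℝ≥0∞) ≠ ∞) :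
    ∃ n : ℕ, ∑' i, (f i : ℝ≥0∞) = n := by
  have hfin : {i | (1 : ℝ≥0∞) ≤ f i}.Finite :=
    ENNReal.finite_const_le_of_tsum_ne_top h one_ne_zero
  refine ⟨∑ i ∈ hfin.toFinset, f i, ?_⟩
  rw [tsum_eq_sum (s := hfin.toFinset) fun i hi ↦ ?_, Nat.cast_sum]
  simpa [Nat.lt_one_iff] using hi

namespace MeasureTheory.Measure

variable {Ω : Type*} [MeasurableSpace Ω]

def IsNatValued (μ : Measure Ω) : Prop :=
  ∀ A, MeasurableSet A → ∃ n : ℕ, μ A = n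

lemma isNatValued_of_isClosed [TopologicalSpace Ω] [BorelSpace Ω] {μ : Measure Ω}
    [IsFiniteMeasure μ] (h : ∀ F, IsClosed F → ∃ n : ℕ, μ F = n) : μ.IsNatValued := by
  refine MeasurableSpace.induction_on_inter (C := fun A _ ↦ ∃ n : ℕ, μ A = n)
    (BorelSpace.measurable_eq.trans borel_eq_generateFrom_isClosed) isPiSystem_isClosed
    ⟨0, by simp⟩ h ?_ ?_
  · rintro A hA ⟨m, hm⟩
    obtain ⟨N, hN⟩ := h univ isClosed_univ
    exact ⟨N - m, by rw [measure_compl hA (measure_ne_top _ _), hm, hN, ENNReal.natCast_sub]⟩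
  · intro f hdisj hf ih
    choose n hn using ih
    have hsum : μ (⋃ i, f i) = ∑' i, (n i : ℝ≥0∞) :=
      (measure_iUnion hdisj hf).trans (tsum_congr hn)
    exact hsum ▸ ENNReal.exists_tsum_natCast_eq (hsum ▸ measure_ne_top μ _)

lemma exists_measure_eq_natCast_of_forall_levyProkhorovEDist_lt [PseudoEMetricSpace Ω]
    [OpensMeasurableSpace Ω] {μ : Measure Ω} [IsFiniteMeasure μ]
    (hμ : ∀ ε > 0, ∃ ν : Measure Ω, ν.IsNatValued ∧ levyProkhorovEDist μ ν < ε)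
    {F : Set Ω} (hF : IsClosed F) : ∃ n : ℕ, μ F = n := by
  refine ENNReal.exists_natCast_eq_of_forall_le_add (measure_ne_top μ F) fun δ hδ ↦ ?_
  have hthick : ∀ᶠ r in 𝓝[>] (0 : ℝ), μ (thickening r F) < μ F + δ / 2 :=
    (tendsto_measure_thickening_of_isClosed ⟨1, one_pos, measure_ne_top μ _⟩
      hF).eventually_lt_const (ENNReal.lt_add_right (measure_ne_top μ F) (by simpa using hδ.ne'))
  obtain ⟨r, hr, hr0⟩ := (hthick.and self_mem_nhdsWithin).exists
  set ε := min (δ / 2) (ENNReal.ofReal (r / 2))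
  have hε : 0 < ε := lt_min (by simpa using hδ.ne') (by simpa using hr0)
  have hεr : ε.toReal + ε.toReal ≤ r := by
    have := ENNReal.toReal_le_of_le_ofReal (by positivity)
      (min_le_right (δ / 2) (.ofReal (r / 2)))
    linarith
  obtain ⟨ν, hν, hμν⟩ := hμ ε hε
  obtain ⟨n, hn⟩ := hν (thickening ε.toReal F) isOpen_thickening.measurableSet
  refine ⟨n, ?_, ?_⟩
  · calc μ F ≤ ν (thickening ε.toReal F) + ε :=
          left_measure_le_of_levyProkhorovEDist_lt hμν hF.measurableSet
      _ ≤ n + δ := by rw [hn]; gcongr; exact (min_le_left _ _).trans ENNReal.half_le_self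
  · calc (n : ℝ≥0∞) = ν (thickening ε.toReal F) := hn.symm
      _ ≤ μ (thickening ε.toReal (thickening ε.toReal F)) + ε :=
        right_measure_le_of_levyProkhorovEDist_lt hμν isOpen_thickening.measurableSet
      _ ≤ μ (thickening r F) + δ / 2 := by
        gcongr
        · exact (thickening_thickening_subset _ _ _).trans (thickening_mono hεr _)
        · exact min_le_left _ _
      _ ≤ μ F + δ / 2 + δ / 2 := by gcongr
      _ = μ F + δ := by rw [add_assoc, ENNReal.add_halves]

lemma isNatValued_of_forall_levyProkhorovEDist_lt [PseudoEMetricSpace Ω] [BorelSpace Ω]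
    {μ : Measure Ω} [IsFiniteMeasure μ]
    (hμ : ∀ ε > 0, ∃ ν : Measure Ω, ν.IsNatValued ∧ levyProkhorovEDist μ ν < ε) :
    μ.IsNatValued :=
  isNatValued_of_isClosed fun _ ↦ exists_measure_eq_natCast_of_forall_levyProkhorovEDist_lt hμ

end MeasureTheory.Measure

lemma MeasureTheory.FiniteMeasure.isNatValued_toMeasure_iff {Ω : Type*} [MeasurableSpace Ω]
    (μ : FiniteMeasure Ω) :
    (μ : Measure Ω).IsNatValued ↔ ∀ A, MeasurableSet A → ∃ n : ℕ, μ A = n := by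
  simp only [Measure.IsNatValued, ← ennreal_coeFn_eq_coeFn_toMeasure]
  exact forall₂_congr fun _ _ ↦ exists_congr fun _ ↦ by norm_cast

theorem stmt_2_general {S : Type*} [MetricSpace S] [MeasurableSpace S] [BorelSpace S] :
    IsClosed {μ : LevyProkhorov (FiniteMeasure S) |
      ∀ A : Set S, MeasurableSet A →
        ∃ n : ℕ, (LevyProkhorov.toMeasureEquiv (α := FiniteMeasure S) μ) A = n} := by
  simp only [LevyProkhorov.toMeasureEquiv_apply, ← FiniteMeasure.isNatValued_toMeasure_iff]
  refine isClosed_of_closure_subset fun μ hμ ↦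
    Measure.isNatValued_of_forall_levyProkhorovEDist_lt fun ε hε ↦ ?_
  obtain ⟨ν, hν, hμν⟩ := EMetric.mem_closure_iff.1 hμ ε hε
  exact ⟨_, hν, hμν⟩

/-- The set `M_ℕ(S)` of finite measures taking only non-negative integer values is closed
in the space of finite non-negative measures with the Lévy–Prokhorov metric. -/
theorem stmt_2 {S : Type*} [MetricSpace S] [CompleteSpace S] [SecondCountableTopology S]
    [MeasurableSpace S] [BorelSpace S] :
    IsClosed {μ : LevyProkhorov (FiniteMeasure S) |
      ∀ A : Set S, MeasurableSet A →
        ∃ n : ℕ, (LevyProkhorov.toMeasureEquiv (α := FiniteMeasure S) μ) A = n} :=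
  stmt_2_general
end

section
/- Let (S,𝒮) be a Polish space and Sₙ ∈ 𝒮 with Sₙ ↑ S. Then the space M_{ℕ̄}({Sₙ}) of ℕ∪{∞}-valued measures θ on 𝒮 satisfying θ(Sₙ) < ∞ for all n, equipped with the σ-algebra generated by the evaluation maps μ ↦ μ(B), B ∈ 𝒮, is a Polish (standard Borel) measurable space: there is a complete separable metric ρ on M_{ℕ̄}({Sₙ}) whose Borel σ-algebra equals this σ-algebra. -/
/-!
Embed `S` measurably into `[0, ∞) ⊂ ℝ≥0∞` by `f` and cut it into the disjoint pieces
`Dₙ = disjointed Sn n`. For `θ` in `M_{ℕ̄}({Sₙ})`, the image under `f` of `θ` restricted to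
`Dₙ` is a finite sum of Dirac masses, and its atoms, listed in increasing order with
multiplicity, are the quantiles `sInf {t | i + 1 ≤ f_*(θ|Dₙ) (Iic t)}`; these depend measurably
on `θ`. So `θ ↦ (atoms)` is a measurable map into the standard Borel space `ℕ × ℕ → ℝ≥0∞`
with a measurable left inverse (pull back the sum of the Dirac masses along `f`), which
identifies `M_{ℕ̄}({Sₙ})` with a measurable set of codes. Hence it is standard Borel, and a
compatible Polish topology provides the metric.
-/

open MeasureTheory

/-- The family of `ℕ∪{∞}`-valued measures on a Polish space `S` which are finite on each
member of an increasing family `Sₙ ↑ S`. -/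
def MbarN {S : Type*} [MeasurableSpace S] (Sn : ℕ → Set S) :=
  {μ : Measure S // (∀ A : Set S, MeasurableSet A → μ A = ⊤ ∨ ∃ k : ℕ, μ A = k) ∧
    ∀ n, μ (Sn n) < ⊤}

open Set Function
open scoped ENNReal

theorem measurable_sInf_of_isUpperSet {X α : Type*} [MeasurableSpace X] [CompleteLinearOrder α]
    [TopologicalSpace α] [OrderTopology α] [SecondCountableTopology α] [DenselyOrdered α]
    [MeasurableSpace α] [BorelSpace α] {s : X → Set α} (hs : ∀ x, IsUpperSet (s x))
    (hmeas : ∀ t, MeasurableSet {x | t ∈ s x}) : Measurable fun x => sInf (s x) := by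
  obtain ⟨D, hDc, hDd⟩ := TopologicalSpace.exists_countable_dense α
  refine measurable_of_Ici fun a => ?_
  have hpre : (fun x => sInf (s x)) ⁻¹' Ici a = ⋂ d ∈ D, {x | d ∈ s x → a ≤ d} := by
    ext x
    simp only [mem_preimage, mem_Ici, le_sInf_iff, mem_iInter, mem_ofPred_eq]
    refine ⟨fun h d _ hd => h d hd, fun h t ht => le_of_not_gt fun hta => ?_⟩
    obtain ⟨d, hdD, htd, hda⟩ := hDd.exists_between hta
    exact (h d hdD (hs x htd.le ht)).not_gt hda
  rw [hpre]
  exact .biInter hDc fun d _ => (hmeas d).imp (.const _)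

/-- The right-continuity of `t ↦ μ (Iic t)`. -/
theorem sInf_mem_setOf_le_measure_Iic {α : Type*} [CompleteLinearOrder α] [TopologicalSpace α]
    [OrderTopology α] [FirstCountableTopology α] [MeasurableSpace α] [OpensMeasurableSpace α]
    (μ : Measure α) [IsFiniteMeasure μ] {c : ℝ≥0∞} (hne : {t | c ≤ μ (Iic t)}.Nonempty) :
    sInf {t | c ≤ μ (Iic t)} ∈ {t | c ≤ μ (Iic t)} := by
  obtain ⟨u, hu_anti, hu_lim, hu_mem⟩ := exists_seq_tendsto_sInf hne (OrderBot.bddBelow _)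
  have hIic : Iic (sInf {t | c ≤ μ (Iic t)}) = ⋂ n, Iic (u n) :=
    Subset.antisymm (subset_iInter fun n => Iic_subset_Iic.2 (sInf_le (hu_mem n)))
      fun x hx => ge_of_tendsto' hu_lim fun n => mem_iInter.1 hx n
  rw [mem_ofPred_eq, hIic, Antitone.measure_iInter (fun m n hmn => Iic_subset_Iic.2 (hu_anti hmn))
    (fun n => measurableSet_Iic.nullMeasurableSet) ⟨0, measure_ne_top μ _⟩]
  exact le_iInf hu_mem

/-- For a finite `ℕ`-valued measure, the `(i + 1)`-st smallest atom counted with multiplicity;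
`⊤ = sInf ∅` if there are at most `i` atoms. -/
noncomputable def nthAtom (μ : Measure ℝ≥0∞) (i : ℕ) : ℝ≥0∞ :=
  sInf {t | (i + 1 : ℝ≥0∞) ≤ μ (Iic t)}

theorem nthAtom_le_iff (μ : Measure ℝ≥0∞) [IsFiniteMeasure μ] (i : ℕ) {t : ℝ≥0∞} (ht : t ≠ ⊤) :
    nthAtom μ i ≤ t ↔ (i + 1 : ℝ≥0∞) ≤ μ (Iic t) := by
  refine ⟨fun h => ?_, fun h => sInf_le h⟩
  rcases eq_empty_or_nonempty {t | (i + 1 : ℝ≥0∞) ≤ μ (Iic t)} with hT | hT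
  · rw [nthAtom, hT, sInf_empty, top_le_iff] at h
    exact absurd h ht
  · exact (sInf_mem_setOf_le_measure_Iic μ hT).trans (measure_mono (Iic_subset_Iic.2 h))

theorem Measurable.nthAtom {X : Type*} [MeasurableSpace X] {κ : X → Measure ℝ≥0∞}
    (hκ : Measurable κ) (i : ℕ) : Measurable fun x => nthAtom (κ x) i :=
  measurable_sInf_of_isUpperSet
    (fun _ _ _ hst hs => hs.trans (measure_mono (Iic_subset_Iic.2 hst)))
    fun _ => measurableSet_le measurable_const ((Measure.measurable_coe measurableSet_Iic).comp hκ)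

theorem measure_univ_eq_iSup_Iic_natCast {μ : Measure ℝ≥0∞} (hμ : μ {⊤} = 0) :
    μ univ = ⨆ n : ℕ, μ (Iic n) := by
  rw [← measure_sdiff_null hμ, ← compl_eq_univ_sdiff, ← ENNReal.iUnion_Iic_coe_nat]
  exact Monotone.measure_iUnion fun m n hmn => Iic_subset_Iic.2 (by exact_mod_cast hmn)

theorem tsum_ite_lt_natCast (m : ℕ) : ∑' i : ℕ, (if i < m then 1 else 0 : ℝ≥0∞) = m := by
  rw [tsum_eq_sum (s := Finset.range m) fun i hi => if_neg (by simpa using hi)]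
  simp [Finset.filter_true_of_mem fun i hi => Finset.mem_range.1 hi]

theorem eq_restrict_sum_dirac_nthAtom (μ : Measure ℝ≥0∞) [IsFiniteMeasure μ]
    (hnat : ∀ t, ∃ m : ℕ, μ (Iic t) = m) (htop : μ {⊤} = 0) :
    μ = (Measure.sum fun i => Measure.dirac (nthAtom μ i)).restrict {⊤}ᶜ := by
  set ν := (Measure.sum fun i => Measure.dirac (nthAtom μ i)).restrict {⊤}ᶜ
  have hν : ν {⊤} = 0 := by simp [ν]
  have hIic : ∀ t ≠ ⊤, μ (Iic t) = ν (Iic t) := by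
    intro t ht
    obtain ⟨m, hm⟩ := hnat t
    have hdirac : ∀ i, Measure.dirac (nthAtom μ i) (Iic t) = if i < m then 1 else 0 := by
      intro i
      simp only [Measure.dirac_apply' _ measurableSet_Iic, indicator_apply, mem_Iic,
        nthAtom_le_iff μ i ht, hm, Pi.one_apply]
      norm_cast
    rw [Measure.restrict_apply measurableSet_Iic, inter_eq_left.2 (by simpa using ht),
      Measure.sum_apply _ measurableSet_Iic]
    simp only [hdirac, tsum_ite_lt_natCast, hm]
  refine Measure.ext_of_Iic μ ν fun t => ?_
  rcases eq_or_ne t ⊤ with rfl | ht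
  · rw [Iic_top, measure_univ_eq_iSup_Iic_natCast htop, measure_univ_eq_iSup_Iic_natCast hν]
    simp only [fun n : ℕ => hIic n (ENNReal.natCast_ne_top n)]
  · exact hIic t ht

theorem ENat.toENNReal_eq_top_or_natCast (n : ℕ∞) : (n : ℝ≥0∞) = ⊤ ∨ ∃ k : ℕ, (n : ℝ≥0∞) = k := by
  induction n using ENat.recTopCoe <;> simp

theorem MeasurableEquiv.standardBorelSpace {α β : Type*} [MeasurableSpace α] [MeasurableSpace β]
    [StandardBorelSpace β] (e : α ≃ᵐ β) : StandardBorelSpace α := by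
  let := upgradeStandardBorel β
  let : TopologicalSpace α := .induced e inferInstance
  have : PolishSpace α :=
    (e.toEquiv.toHomeomorphOfIsInducing ⟨rfl⟩).isClosedEmbedding.polishSpace
  refine ⟨⟨inferInstance, ⟨?_⟩, this⟩⟩
  rw [borel_comap, ← eq_borel_upgradeStandardBorel β]
  exact e.measurableEmbedding.comap_eq.symm

theorem standardBorelSpace_subtype_of_retract {Z Y : Type*} [MeasurableSpace Z]
    [MeasurableSpace Y] [StandardBorelSpace Y] {P : Z → Prop} {φ : Z → Y} {r : Y → Z}
    (hφ : Measurable φ) (hr : Measurable r) (hrφ : ∀ x, P x → r (φ x) = x)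
    (hP : MeasurableSet {y | P (r y)}) : StandardBorelSpace {x // P x} := by
  set G := {y | P (r y) ∧ φ (r y) = y}
  have hG : MeasurableSet G := hP.inter (measurableSet_eq_fun (hφ.comp hr) measurable_id)
  have := hG.standardBorel
  exact MeasurableEquiv.standardBorelSpace (β := G)
    { toFun x := ⟨φ x, by rw [hrφ x x.2]; exact x.2, by rw [hrφ x x.2]⟩
      invFun y := ⟨r y.1, y.2.1⟩
      left_inv x := Subtype.ext (hrφ x x.2)
      right_inv y := Subtype.ext y.2.2
      measurable_toFun := (hφ.comp measurable_subtype_coe).subtype_mk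
      measurable_invFun := (hr.comp measurable_subtype_coe).subtype_mk }

theorem StandardBorelSpace.exists_metricSpace (X : Type*) [m₀ : MeasurableSpace X]
    [StandardBorelSpace X] :
    ∃ m : MetricSpace X, @CompleteSpace X m.toUniformSpace ∧
      @TopologicalSpace.SeparableSpace X m.toUniformSpace.toTopologicalSpace ∧
      @borel X m.toUniformSpace.toTopologicalSpace = m₀ := by
  let := upgradeStandardBorel X
  exact ⟨TopologicalSpace.completelyMetrizableMetric X,
    TopologicalSpace.complete_completelyMetrizableMetric X, inferInstance,
    (eq_borel_upgradeStandardBorel X).symm⟩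

theorem exists_measurableEmbedding_ennreal_ne_top (S : Type*) [MeasurableSpace S]
    [StandardBorelSpace S] : ∃ f : S → ℝ≥0∞, MeasurableEmbedding f ∧ ∀ x, f x ≠ ⊤ := by
  obtain ⟨f, hf⟩ := exists_measurableEmbedding_real S
  have hexp : MeasurableEmbedding fun r : ℝ => ENNReal.ofReal (Real.exp r) :=
    (by fun_prop : Measurable fun r : ℝ => ENNReal.ofReal (Real.exp r)).measurableEmbedding
      fun a b h => Real.exp_injective <|
        (ENNReal.ofReal_eq_ofReal_iff (Real.exp_pos a).le (Real.exp_pos b).le).1 h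
  exact ⟨_, hexp.comp hf, fun _ => ENNReal.ofReal_ne_top⟩

section Encoding

variable {S ι : Type*} [MeasurableSpace S] {f : S → ℝ≥0∞}

/-- One unit of mass at `x` for each `p` with `f x = z p`; codes `z p` outside the range of `f`,
such as `⊤`, carry no mass. -/
noncomputable def comapSumDirac (f : S → ℝ≥0∞) (z : ι → ℝ≥0∞) : Measure S :=
  (Measure.sum fun p => Measure.dirac (z p)).comap f

theorem comapSumDirac_apply (hf : MeasurableEmbedding f) (z : ι → ℝ≥0∞) {B : Set S}
    (hB : MeasurableSet B) : comapSumDirac f z B = ∑' p, (f '' B).indicator 1 (z p) := by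
  simp only [comapSumDirac, hf.comap_apply, Measure.sum_apply _ (hf.measurableSet_image' hB),
    Measure.dirac_apply' _ (hf.measurableSet_image' hB)]

theorem measurable_comapSumDirac [Countable ι] [MeasurableSpace ι] (hf : MeasurableEmbedding f) :
    Measurable (comapSumDirac f : (ι → ℝ≥0∞) → Measure S) := by
  refine Measure.measurable_of_measurable_coe _ fun B hB => ?_
  simp_rw [comapSumDirac_apply hf _ hB]
  exact .tsum fun p =>
    (measurable_one.indicator (hf.measurableSet_image' hB)).comp (measurable_pi_apply p)

theorem comapSumDirac_apply_eq_top_or (hf : MeasurableEmbedding f) (z : ι → ℝ≥0∞) {B : Set S}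
    (hB : MeasurableSet B) :
    comapSumDirac f z B = ⊤ ∨ ∃ k : ℕ, comapSumDirac f z B = k := by
  have : comapSumDirac f z B = (z ⁻¹' (f '' B)).encard := by
    rw [comapSumDirac_apply hf z hB, ← ENNReal.tsum_set_one]
    exact (tsum_subtype _ 1).symm
  rw [this]
  exact ENat.toENNReal_eq_top_or_natCast _

noncomputable def atomCode (f : S → ℝ≥0∞) (D : ℕ → Set S) (θ : Measure S) : ℕ × ℕ → ℝ≥0∞ :=
  fun p => nthAtom ((θ.restrict (D p.1)).map f) p.2

theorem measurable_atomCode (hf : MeasurableEmbedding f) {D : ℕ → Set S}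
    (hD : ∀ n, MeasurableSet (D n)) : Measurable (atomCode f D) := by
  refine measurable_pi_lambda _ fun p => Measurable.nthAtom ?_ p.2
  refine Measure.measurable_of_measurable_coe _ fun B hB => ?_
  simp_rw [Measure.map_apply hf.measurable hB, Measure.restrict_apply (hf.measurable hB)]
  exact Measure.measurable_coe ((hf.measurable hB).inter (hD p.1))

theorem comapSumDirac_atomCode (hf : MeasurableEmbedding f) (hf_top : ∀ x, f x ≠ ⊤)
    {D : ℕ → Set S} (hD : ∀ n, MeasurableSet (D n)) (hdisj : Pairwise (Disjoint on D))
    (hDU : ⋃ n, D n = univ) {θ : Measure S}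
    (hnat : ∀ A, MeasurableSet A → θ A = ⊤ ∨ ∃ k : ℕ, θ A = k) (hfin : ∀ n, θ (D n) ≠ ⊤) :
    comapSumDirac f (atomCode f D θ) = θ := by
  have hdecomp (n : ℕ) : (θ.restrict (D n)).map f =
      (Measure.sum fun i => Measure.dirac (atomCode f D θ (n, i))).restrict {⊤}ᶜ := by
    have : IsFiniteMeasure (θ.restrict (D n)) := isFiniteMeasure_restrict.2 (hfin n)
    refine eq_restrict_sum_dirac_nthAtom _ (fun t => ?_) ?_
    · rw [hf.map_apply, Measure.restrict_apply' (hD n)]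
      refine (hnat _ ((hf.measurable measurableSet_Iic).inter (hD n))).resolve_left ?_
      exact ((measure_mono inter_subset_right).trans_lt (hfin n).lt_top).ne
    · rw [hf.map_apply, Measure.restrict_apply' (hD n),
        preimage_singleton_eq_empty.2 fun ⟨x, hx⟩ => hf_top x hx, empty_inter, measure_empty]
  ext B hB
  have hfB : MeasurableSet (f '' B) := hf.measurableSet_image' hB
  have hmap (ρ : Measure S) : ρ.map f (f '' B) = ρ B := by
    rw [hf.map_apply, preimage_image_eq B hf.injective]
  rw [comapSumDirac, hf.comap_apply, Measure.sum_apply _ hfB, ENNReal.tsum_prod']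
  conv_rhs => rw [← Measure.restrict_univ (μ := θ), ← hDU, Measure.restrict_iUnion hdisj hD,
    Measure.sum_apply _ hB]
  refine tsum_congr fun n => ?_
  rw [← hmap, hdecomp n, Measure.restrict_apply hfB,
    inter_eq_left.2 (by rintro _ ⟨x, -, rfl⟩; exact hf_top x), Measure.sum_apply _ hfB]

end Encoding

theorem measurableSpace_subtype_measure_eq_iSup_comap {S : Type*} [MeasurableSpace S]
    (P : Measure S → Prop) :
    (Subtype.instMeasurableSpace : MeasurableSpace {μ // P μ}) =
      ⨆ (B : Set S) (_ : MeasurableSet B),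
        MeasurableSpace.comap (fun μ : {μ // P μ} => μ.1 B) inferInstance := by
  simp only [Subtype.instMeasurableSpace, Measure.instMeasurableSpace, MeasurableSpace.comap_iSup,
    MeasurableSpace.comap_comp]
  rfl

section MbarN

variable {S : Type*} [MeasurableSpace S]

instance (Sn : ℕ → Set S) : MeasurableSpace (MbarN Sn) := Subtype.instMeasurableSpace

theorem MbarN.standardBorelSpace [StandardBorelSpace S] {Sn : ℕ → Set S}
    (hmeas : ∀ n, MeasurableSet (Sn n)) (hunion : ⋃ n, Sn n = univ) :
    StandardBorelSpace (MbarN Sn) := by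
  obtain ⟨f, hf, hf_top⟩ := exists_measurableEmbedding_ennreal_ne_top S
  have hD : ∀ n, MeasurableSet (disjointed Sn n) := .disjointed hmeas
  refine standardBorelSpace_subtype_of_retract (measurable_atomCode hf hD)
    (measurable_comapSumDirac hf) (fun θ hθ => ?_) ?_
  · refine comapSumDirac_atomCode hf hf_top hD (disjoint_disjointed Sn)
      (iUnion_disjointed.trans hunion) hθ.1 fun n => ?_
    exact ((measure_mono (disjointed_subset Sn n)).trans_lt (hθ.2 n)).ne
  · have hfin : MeasurableSet {z : ℕ × ℕ → ℝ≥0∞ | ∀ n, comapSumDirac f z (Sn n) < ⊤} := by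
      rw [ofPred_forall]
      exact .iInter fun n => measurableSet_lt
        ((Measure.measurable_coe (hmeas n)).comp (measurable_comapSumDirac hf)) measurable_const
    convert hfin using 1
    ext z
    exact and_iff_right fun _ => comapSumDirac_apply_eq_top_or hf z

end MbarN

theorem stmt_3_general {S : Type*} [TopologicalSpace S] [PolishSpace S]
    [MeasurableSpace S] [BorelSpace S]
    (Sn : ℕ → Set S) (hmeas : ∀ n, MeasurableSet (Sn n))
    (hunion : ⋃ n, Sn n = Set.univ) :
    ∃ m : MetricSpace (MbarN Sn),
      @CompleteSpace (MbarN Sn) m.toPseudoMetricSpace.toUniformSpace ∧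
      @TopologicalSpace.SeparableSpace (MbarN Sn)
        m.toPseudoMetricSpace.toUniformSpace.toTopologicalSpace ∧
      @borel (MbarN Sn) m.toPseudoMetricSpace.toUniformSpace.toTopologicalSpace =
        ⨆ (B : Set S) (_ : MeasurableSet B),
          MeasurableSpace.comap (fun μ : MbarN Sn => μ.1 B) inferInstance := by
  have := MbarN.standardBorelSpace hmeas hunion
  obtain ⟨m, hcomplete, hsep, hborel⟩ := StandardBorelSpace.exists_metricSpace (MbarN Sn)
  exact ⟨m, hcomplete, hsep, hborel.trans (measurableSpace_subtype_measure_eq_iSup_comap _)⟩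

/-- `(M_{ℕ̄}({Sₙ}), 𝓜_{ℕ̄}({Sₙ}))` is a Polish measurable space: there is a complete separable
metric on it whose Borel σ-algebra is the σ-algebra generated by the evaluations `μ ↦ μ B`. -/
theorem stmt_3 {S : Type*} [TopologicalSpace S] [PolishSpace S]
    [MeasurableSpace S] [BorelSpace S]
    (Sn : ℕ → Set S) (hmeas : ∀ n, MeasurableSet (Sn n)) (hmono : Monotone Sn)
    (hunion : ⋃ n, Sn n = Set.univ) :
    ∃ m : MetricSpace (MbarN Sn),
      @CompleteSpace (MbarN Sn) m.toPseudoMetricSpace.toUniformSpace ∧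
      @TopologicalSpace.SeparableSpace (MbarN Sn)
        m.toPseudoMetricSpace.toUniformSpace.toTopologicalSpace ∧
      @borel (MbarN Sn) m.toPseudoMetricSpace.toUniformSpace.toTopologicalSpace =
        ⨆ (B : Set S) (_ : MeasurableSet B),
          MeasurableSpace.comap (fun μ : MbarN Sn => μ.1 B) inferInstance :=
  stmt_3_general Sn hmeas hunion
end

section
/- Given a Polish space S and sets Sₙ ↑ S with Sₙ closed, suppose μⱼ are ℕ̄-valued measures finite on each Sₙ and θₙ are finite measures with π(μⱼ(·∩Sₙ), θₙ) → 0 as j → ∞ for every n, where π is the Lévy–Prokhorov metric. If each Sₙ is clopen, then θₘ(·) = θ_k(·∩Sₘ) for m < k, the limit θ(A) = limₙ θₙ(A) defines a σ-additive ℕ̄-valued measure on S, and θₘ(·) = θ(·∩Sₘ). -/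
/-!
Restriction to a set `C` with `θ`-null frontier is continuous at `θ` for the Lévy–Prokhorov
distance: the mass that an `r`-thickening moves across the frontier is controlled by the `θ`-mass
of the points within `2r` of both `C` and `Cᶜ`, which shrinks to `θ (frontier C)`.
For clopen `Sₘ ⊆ S_k` the measures `μⱼ(·∩Sₘ)` therefore converge both to `θₘ` and to
`θ_k(·∩Sₘ)`, and limits of finite measures are unique.

A closed set of values `K ⊆ [0, ∞]` taken by all `μⱼ(·∩Sₙ)` is inherited by the limit: on a closed
set `F`, `θ F` is squeezed between `ν (thickening r F) ∓ r` for `ν` close to `θ`, and inner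
regularity by closed sets passes to measurable sets. Taking `K = ℕ ∪ {∞}` makes every `θₙ`, and
hence their increasing limit, `ℕ̄`-valued.
-/

open MeasureTheory Filter Metric Set Topology
open scoped ENNReal

theorem IsClosed.iSup_mem {α ι : Type*} [CompleteLinearOrder α] [TopologicalSpace α]
    [OrderTopology α] [Nonempty ι] {K : Set α} (hK : IsClosed K) {f : ι → α}
    (hf : ∀ i, f i ∈ K) : ⨆ i, f i ∈ K :=
  hK.closure_subset_iff.2 (range_subset_iff.2 hf) (isLUB_iSup.mem_closure (range_nonempty f))

theorem ENat.range_toENNReal :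
    range ((↑) : ℕ∞ → ℝ≥0∞) = {x : ℝ≥0∞ | x = ⊤ ∨ ∃ k : ℕ, x = k} := by
  ext x
  constructor
  · rintro ⟨n, rfl⟩
    induction n using ENat.recTopCoe <;> simp
  · rintro (rfl | ⟨k, rfl⟩)
    exacts [⟨⊤, ENat.toENNReal_top⟩, ⟨k, ENat.toENNReal_coe k⟩]

section

variable {Ω : Type*} [PseudoMetricSpace Ω] [MeasurableSpace Ω] [OpensMeasurableSpace Ω]

theorem tendsto_measure_thickening_inter_thickening_compl {θ : Measure Ω} [IsFiniteMeasure θ]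
    (C : Set Ω) :
    Tendsto (fun r => θ (thickening r C ∩ thickening r Cᶜ)) (𝓝[>] 0) (𝓝 (θ (frontier C))) := by
  have hfrontier : ⋂ r > (0 : ℝ), thickening r C ∩ thickening r Cᶜ = frontier C := by
    ext x
    simp only [frontier_eq_closure_inter_closure, closure_eq_iInter_thickening, mem_iInter,
      mem_inter_iff, ← forall_and]
  rw [← hfrontier]
  exact tendsto_measure_biInter_gt
    (fun r _ => (isOpen_thickening.inter isOpen_thickening).nullMeasurableSet)
    (fun _ _ _ hrs => inter_subset_inter (thickening_mono hrs _) (thickening_mono hrs _))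
    ⟨1, one_pos, measure_ne_top _ _⟩

theorem levyProkhorovEDist_restrict_le {ν θ : Measure Ω} {C : Set Ω} (hC : MeasurableSet C)
    {r : ℝ} (hr : 0 < r) (h : levyProkhorovEDist ν θ < ENNReal.ofReal r) :
    levyProkhorovEDist (ν.restrict C) (θ.restrict C) ≤
      ENNReal.ofReal (2 * r) + θ (thickening (2 * r) C ∩ thickening (2 * r) Cᶜ) := by
  set L := thickening (2 * r) C ∩ thickening (2 * r) Cᶜ
  set ε := ENNReal.ofReal (2 * r) + θ L
  rcases eq_or_ne ε ⊤ with hε | hε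
  · simp [hε]
  have hrε : r ≤ ε.toReal := (ENNReal.ofReal_le_iff_le_toReal hε).1
    (le_add_right (ENNReal.ofReal_le_ofReal (by linarith)))
  have hsplit : ∀ B : Set Ω,
      thickening r (B ∩ C) ⊆ (thickening r B ∩ C) ∪ (thickening r C ∩ Cᶜ) := by
    intro B x hx
    by_cases hxC : x ∈ C
    · exact Or.inl ⟨thickening_subset_of_subset r inter_subset_left hx, hxC⟩
    · exact Or.inr ⟨thickening_subset_of_subset r inter_subset_right hx, hxC⟩
  have hedge : thickening r C ∩ Cᶜ ⊆ L := inter_subset_inter (thickening_mono (by linarith) C)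
    (self_subset_thickening (by linarith) _)
  have hlayer : thickening r (thickening r C ∩ Cᶜ) ⊆ L := by
    refine subset_inter ?_ ?_
    · refine (thickening_subset_of_subset r inter_subset_left).trans
        ((thickening_thickening_subset r r C).trans (thickening_mono (by linarith) C))
    · refine (thickening_subset_of_subset r inter_subset_right).trans
        (thickening_mono (by linarith) _)
  have hε2 : θ L + ENNReal.ofReal r + ENNReal.ofReal r = ε := by
    rw [add_assoc, ← ENNReal.ofReal_add hr.le hr.le, ← two_mul, add_comm]
  have hε1 : θ L + ENNReal.ofReal r ≤ ε := hε2 ▸ le_self_add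
  refine sInf_le fun B hB => ⟨?_, ?_⟩
  · calc ν.restrict C B = ν (B ∩ C) := Measure.restrict_apply hB
      _ ≤ θ (thickening r (B ∩ C)) + ENNReal.ofReal r := by
          simpa [ENNReal.toReal_ofReal hr.le] using
            left_measure_le_of_levyProkhorovEDist_lt h (hB.inter hC)
      _ ≤ θ (thickening r B ∩ C) + θ L + ENNReal.ofReal r := by
          gcongr
          exact (measure_mono (hsplit B)).trans ((measure_union_le _ _).trans (by gcongr))
      _ ≤ θ.restrict C (thickening ε.toReal B) + ε := by
          rw [Measure.restrict_apply isOpen_thickening.measurableSet, add_assoc]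
          gcongr
  · calc θ.restrict C B = θ (B ∩ C) := Measure.restrict_apply hB
      _ ≤ ν (thickening r (B ∩ C)) + ENNReal.ofReal r := by
          simpa [ENNReal.toReal_ofReal hr.le] using
            right_measure_le_of_levyProkhorovEDist_lt h (hB.inter hC)
      _ ≤ ν (thickening r B ∩ C) + ν (thickening r C ∩ Cᶜ) + ENNReal.ofReal r := by
          gcongr
          exact (measure_mono (hsplit B)).trans (measure_union_le _ _)
      _ ≤ ν (thickening r B ∩ C) + (θ L + ENNReal.ofReal r) + ENNReal.ofReal r := by
          gcongr
          have := left_measure_le_of_levyProkhorovEDist_lt (B := thickening r C ∩ Cᶜ) h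
            (isOpen_thickening.measurableSet.inter hC.compl)
          rw [ENNReal.toReal_ofReal hr.le] at this
          exact this.trans (by gcongr)
      _ = ν (thickening r B ∩ C) + (θ L + ENNReal.ofReal r + ENNReal.ofReal r) := by ring
      _ ≤ ν.restrict C (thickening ε.toReal B) + ε := by
          rw [Measure.restrict_apply isOpen_thickening.measurableSet, hε2]
          gcongr

theorem tendsto_levyProkhorovEDist_restrict {ι : Type*} {l : Filter ι} {ν : ι → Measure Ω}
    {θ : Measure Ω} [IsFiniteMeasure θ] {C : Set Ω} (hC : MeasurableSet C)
    (hθC : θ (frontier C) = 0) (h : Tendsto (fun j => levyProkhorovEDist (ν j) θ) l (𝓝 0)) :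
    Tendsto (fun j => levyProkhorovEDist ((ν j).restrict C) (θ.restrict C)) l (𝓝 0) := by
  have hbound : Tendsto (fun r => ENNReal.ofReal r + θ (thickening r C ∩ thickening r Cᶜ))
      (𝓝[>] 0) (𝓝 0) := by
    have hr : Tendsto ENNReal.ofReal (𝓝[>] 0) (𝓝 0) := by
      simpa using (ENNReal.tendsto_ofReal (tendsto_id (x := 𝓝 (0 : ℝ)))).mono_left
        nhdsWithin_le_nhds
    simpa [hθC] using hr.add (tendsto_measure_thickening_inter_thickening_compl (θ := θ) C)
  rw [ENNReal.tendsto_nhds_zero]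
  intro δ hδ
  obtain ⟨r, hrδ, hr⟩ := ((hbound.eventually (gt_mem_nhds hδ)).and self_mem_nhdsWithin).exists
  filter_upwards [h.eventually (gt_mem_nhds (ENNReal.ofReal_pos.2 (half_pos hr)))] with j hj
  have := levyProkhorovEDist_restrict_le hC (half_pos hr) hj
  rw [mul_div_cancel₀ _ two_ne_zero] at this
  exact this.trans hrδ.le

theorem eq_of_tendsto_levyProkhorovEDist [BorelSpace Ω] {ι : Type*} {l : Filter ι} [l.NeBot]
    {ν : ι → Measure Ω} {θ₁ θ₂ : Measure Ω} [IsFiniteMeasure θ₁] [IsFiniteMeasure θ₂]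
    (h₁ : Tendsto (fun j => levyProkhorovEDist (ν j) θ₁) l (𝓝 0))
    (h₂ : Tendsto (fun j => levyProkhorovEDist (ν j) θ₂) l (𝓝 0)) : θ₁ = θ₂ := by
  have hLP : levyProkhorovEDist θ₁ θ₂ = 0 := by
    refine nonpos_iff_eq_zero.1 (ge_of_tendsto' (by simpa using h₁.add h₂) fun j => ?_)
    exact (levyProkhorovEDist_triangle θ₁ (ν j) θ₂).trans_eq
      (by rw [levyProkhorovEDist_comm θ₁])
  have hclosed : ∀ F : Set Ω, IsClosed F → θ₁ F = θ₂ F := fun F hF =>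
    measure_eq_measure_of_levyProkhorovEDist_eq_zero_of_isClosed hLP hF
      ⟨1, one_pos, measure_ne_top _ _⟩ ⟨1, one_pos, measure_ne_top _ _⟩
  refine ext_of_generate_finite _ ?_ isPiSystem_isClosed hclosed (hclosed _ isClosed_univ)
  rw [BorelSpace.measurable_eq (α := Ω), borel_eq_generateFrom_isClosed]

theorem measure_mem_of_tendsto_levyProkhorovEDist_of_isClosed {ι : Type*} {l : Filter ι}
    [l.NeBot] {ν : ι → Measure Ω} {θ : Measure Ω} [IsFiniteMeasure θ] {K : Set ℝ≥0∞}
    (hK : IsClosed K) (hνK : ∀ j B, MeasurableSet B → ν j B ∈ K)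
    (h : Tendsto (fun j => levyProkhorovEDist (ν j) θ) l (𝓝 0)) {F : Set Ω} (hF : IsClosed F) :
    θ F ∈ K := by
  have hj : ∀ r > 0, ∃ j, levyProkhorovEDist (ν j) θ < ENNReal.ofReal (r / 2) := fun r hr =>
    (h.eventually (gt_mem_nhds (ENNReal.ofReal_pos.2 (half_pos hr)))).exists
  have : Nonempty ι := nonempty_of_neBot l
  choose! j hj using hj
  have hhalf : Tendsto (fun r => ENNReal.ofReal (r / 2)) (𝓝[>] 0) (𝓝 0) := by
    simpa using (ENNReal.tendsto_ofReal ((continuous_id.div_const (2 : ℝ)).tendsto 0)).mono_left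
      nhdsWithin_le_nhds
  have hlower : Tendsto (fun r => θ F - ENNReal.ofReal (r / 2)) (𝓝[>] 0) (𝓝 (θ F)) := by
    simpa using ENNReal.Tendsto.sub tendsto_const_nhds hhalf (Or.inl (measure_ne_top θ F))
  have hupper : Tendsto (fun r => θ (thickening r F) + ENNReal.ofReal (r / 2)) (𝓝[>] 0)
      (𝓝 (θ F)) := by
    simpa using (tendsto_measure_thickening_of_isClosed ⟨1, one_pos, measure_ne_top θ _⟩ hF).add
      hhalf
  refine hK.mem_of_tendsto (tendsto_of_tendsto_of_tendsto_of_le_of_le'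
    (f := fun r => ν (j r) (thickening (r / 2) F)) hlower hupper ?_ ?_)
    (Eventually.of_forall fun r => hνK (j r) _ isOpen_thickening.measurableSet)
  · filter_upwards [self_mem_nhdsWithin] with r hr
    have := right_measure_le_of_levyProkhorovEDist_lt (hj r hr) hF.measurableSet
    rw [ENNReal.toReal_ofReal (half_pos hr).le] at this
    exact tsub_le_iff_right.2 this
  · filter_upwards [self_mem_nhdsWithin] with r hr
    have := left_measure_le_of_levyProkhorovEDist_lt (hj r hr)
      (isOpen_thickening (δ := r / 2) (E := F)).measurableSet
    rw [ENNReal.toReal_ofReal (half_pos hr).le] at this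
    refine this.trans (add_le_add_left (measure_mono ?_) _)
    exact (thickening_thickening_subset _ _ F).trans_eq (by rw [add_halves])

theorem measure_mem_of_tendsto_levyProkhorovEDist [BorelSpace Ω] {ι : Type*} {l : Filter ι}
    [l.NeBot] {ν : ι → Measure Ω} {θ : Measure Ω} [IsFiniteMeasure θ] {K : Set ℝ≥0∞}
    (hK : IsClosed K) (hνK : ∀ j B, MeasurableSet B → ν j B ∈ K)
    (h : Tendsto (fun j => levyProkhorovEDist (ν j) θ) l (𝓝 0)) {A : Set Ω}
    (hA : MeasurableSet A) : θ A ∈ K := by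
  have hsup : θ A = ⨆ F : {F // F ⊆ A ∧ IsClosed F}, θ F := by
    rw [Measure.WeaklyRegular.innerRegular_measurable.measure_eq_iSup ⟨hA, measure_ne_top θ A⟩]
    simp [iSup_subtype, iSup_and]
  have : Nonempty {F // F ⊆ A ∧ IsClosed F} := ⟨⟨∅, empty_subset A, isClosed_empty⟩⟩
  exact hsup ▸ hK.iSup_mem fun F =>
    measure_mem_of_tendsto_levyProkhorovEDist_of_isClosed hK hνK h F.2.2

end

section

variable {Ω : Type*} [MeasurableSpace Ω]

theorem exists_measure_apply_eq_iSup_of_monotone {θ : ℕ → Measure Ω} (hθ : Monotone θ) :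
    ∃ Θ : Measure Ω, ∀ A, MeasurableSet A → Θ A = ⨆ n, θ n A := by
  refine ⟨Measure.ofMeasurable (fun A _ => ⨆ n, θ n A) (by simp) fun f hf hdisj => ?_,
    fun A hA => Measure.ofMeasurable_apply A hA⟩
  have hsum := lintegral_iSup (μ := Measure.count) (f := fun n i => θ n (f i))
    (fun n => measurable_of_countable _) (fun _ _ hmn i => hθ hmn (f i))
  simp only [lintegral_count] at hsum
  simp only [measure_iUnion hdisj hf, hsum]

variable {S : ℕ → Set Ω} {θ : ℕ → Measure Ω}

theorem monotone_of_eq_restrict (h : ∀ m k, m ≤ k → θ m = (θ k).restrict (S m)) :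
    Monotone θ := fun m k hmk => h m k hmk ▸ Measure.restrict_le_self

theorem iSup_apply_inter_eq_of_eq_restrict (h : ∀ m k, m ≤ k → θ m = (θ k).restrict (S m))
    {A : Set Ω} (hA : MeasurableSet A) (m : ℕ) : ⨆ n, θ n (A ∩ S m) = θ m A := by
  have hθ : ∀ k, m ≤ k → θ k (A ∩ S m) = θ m A := fun k hmk => by
    rw [h m k hmk, Measure.restrict_apply hA]
  refine le_antisymm (iSup_le fun n => ?_) (le_iSup_of_le m (hθ m le_rfl).ge)
  calc θ n (A ∩ S m) ≤ θ (max n m) (A ∩ S m) := monotone_of_eq_restrict h (le_max_left n m) _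
    _ = θ m A := hθ _ (le_max_right n m)

end

theorem stmt_4_general {S : Type*} [MetricSpace S] [MeasurableSpace S] [BorelSpace S]
    (Sn : ℕ → Set S) (hclopen : ∀ n, IsClopen (Sn n)) (hmono : Monotone Sn)
    (μ : ℕ → Measure S)
    (hμnat : ∀ j, ∀ A : Set S, MeasurableSet A → μ j A = ⊤ ∨ ∃ k : ℕ, μ j A = k)
    (θ : ℕ → Measure S) (hθfin : ∀ n, IsFiniteMeasure (θ n))
    (hconv : ∀ n, Tendsto (fun j => levyProkhorovEDist ((μ j).restrict (Sn n)) (θ n))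
      atTop (nhds 0)) :
    (∀ m k, m < k → θ m = (θ k).restrict (Sn m)) ∧
    ∃ Θ : Measure S,
      (∀ A : Set S, MeasurableSet A → Θ A = ⊤ ∨ ∃ k : ℕ, Θ A = k) ∧
      (∀ A : Set S, MeasurableSet A → Θ A = ⨆ n, θ n A) ∧
      (∀ m, θ m = Θ.restrict (Sn m)) := by
  have hSn : ∀ n, MeasurableSet (Sn n) := fun n => (hclopen n).isClosed.measurableSet
  have consistent : ∀ m k, m ≤ k → θ m = (θ k).restrict (Sn m) := fun m k hmk => by
    have := tendsto_levyProkhorovEDist_restrict (hSn m)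
      (by rw [(hclopen m).frontier_eq, measure_empty]) (hconv k)
    simp only [Measure.restrict_restrict_of_subset (hmono hmk)] at this
    exact eq_of_tendsto_levyProkhorovEDist (hconv m) this
  have hK := ENat.isClosedEmbedding_toENNReal.isClosed_range
  have hθK : ∀ n A, MeasurableSet A → θ n A ∈ range ((↑) : ℕ∞ → ℝ≥0∞) := fun n A hA =>
    measure_mem_of_tendsto_levyProkhorovEDist hK (fun j B hB => by
      rw [Measure.restrict_apply hB, ENat.range_toENNReal]
      exact hμnat j _ (hB.inter (hSn n))) (hconv n) hA
  obtain ⟨Θ, hΘ⟩ := exists_measure_apply_eq_iSup_of_monotone (monotone_of_eq_restrict consistent)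
  refine ⟨fun m k hmk => consistent m k hmk.le, Θ, fun A hA => ?_, hΘ, fun m => ?_⟩
  · have := hK.iSup_mem fun n => hθK n A hA
    rwa [← hΘ A hA, ENat.range_toENNReal] at this
  · ext A hA
    rw [Measure.restrict_apply hA, hΘ _ (hA.inter (hSn m)),
      iSup_apply_inter_eq_of_eq_restrict consistent hA]

/-- If `μⱼ` are `ℕ̄`-valued measures finite on each clopen `Sₙ ↑ S` and
`π(μⱼ(·∩Sₙ), θₙ) → 0` for every `n` (Lévy–Prokhorov distance), then the finite measures `θₙ`
are consistent: `θₘ = θ_k(·∩Sₘ)` for `m < k`, and `θ(A) = limₙ θₙ(A) (= supₙ θₙ(A))` defines a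
σ-additive `ℕ̄`-valued measure with `θₘ = θ(·∩Sₘ)`. -/
theorem stmt_4 {S : Type*} [MetricSpace S] [CompleteSpace S] [SecondCountableTopology S]
    [MeasurableSpace S] [BorelSpace S]
    (Sn : ℕ → Set S) (hclopen : ∀ n, IsClopen (Sn n)) (hmono : Monotone Sn)
    (hunion : ⋃ n, Sn n = Set.univ)
    (μ : ℕ → Measure S)
    (hμnat : ∀ j, ∀ A : Set S, MeasurableSet A → μ j A = ⊤ ∨ ∃ k : ℕ, μ j A = k)
    (hμfin : ∀ j n, μ j (Sn n) < ⊤)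
    (θ : ℕ → Measure S) (hθfin : ∀ n, IsFiniteMeasure (θ n))
    (hconv : ∀ n, Tendsto (fun j => levyProkhorovEDist ((μ j).restrict (Sn n)) (θ n))
      atTop (nhds 0)) :
    (∀ m k, m < k → θ m = (θ k).restrict (Sn m)) ∧
    ∃ Θ : Measure S,
      (∀ A : Set S, MeasurableSet A → Θ A = ⊤ ∨ ∃ k : ℕ, Θ A = k) ∧
      (∀ A : Set S, MeasurableSet A → Θ A = ⨆ n, θ n A) ∧
      (∀ m, θ m = Θ.restrict (Sn m)) :=
  stmt_4_general Sn hclopen hmono μ hμnat θ hθfin hconv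
end
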